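/- arXiv:1710.03972 — 2 statements merged into one kernel-verified Lean document; each statement's English description precedes it below -/
import Mathlib

section
/- Let X be a rational surface of degree d = K_X² with 1 ≤ d, and let D be a (d−2)-class and C a (−1)-class on X. Then D·C ≥ −1, and D·C = −1 can only occur when d = 1 and C = D. In particular, if d ≥ 2 then D·C ≥ 0 for every (−1)-class C. -/
open scoped BigOperators

/-- The intersection form on the Picard lattice `ℤ·L ⊕ ℤ·E₁ ⊕ ⋯ ⊕ ℤ·E_n` of the
blow-up of `ℙ²` at `n` points: `L² = 1`, `Eᵢ² = −1`, mixed products `0`. -/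
def inter (n : ℕ) (x y : ℤ × (Fin n → ℤ)) : ℤ :=
  x.1 * y.1 - ∑ i, x.2 i * y.2 i

/-- The canonical class `K = −3L + E₁ + ⋯ + E_n`. -/
def Ksurf (n : ℕ) : ℤ × (Fin n → ℤ) := (-3, fun _ => 1)

lemma inter_add_left (n : ℕ) (x y z : ℤ × (Fin n → ℤ)) :
    inter n (x + y) z = inter n x z + inter n y z := by
  simp [inter, add_mul, Finset.sum_add_distrib]; ring

lemma inter_smul_left (n : ℕ) (c : ℤ) (x z : ℤ × (Fin n → ℤ)) :
    inter n (c • x) z = c * inter n x z := by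
  simp only [inter, Prod.smul_fst, Prod.smul_snd, Pi.smul_apply, smul_eq_mul]
  rw [mul_sub, Finset.mul_sum]
  congr 1
  · ring
  · exact Finset.sum_congr rfl fun i _ => by ring

lemma inter_comm (n : ℕ) (x y : ℤ × (Fin n → ℤ)) : inter n x y = inter n y x := by
  simp [inter, mul_comm]

lemma inter_add_right (n : ℕ) (x y z : ℤ × (Fin n → ℤ)) :
    inter n z (x + y) = inter n z x + inter n z y := by
  rw [inter_comm, inter_add_left, inter_comm n x, inter_comm n y]

lemma inter_smul_right (n : ℕ) (c : ℤ) (x z : ℤ × (Fin n → ℤ)) :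
    inter n z (c • x) = c * inter n z x := by
  rw [inter_comm, inter_smul_left, inter_comm]

lemma inter_KK (n : ℕ) : inter n (Ksurf n) (Ksurf n) = 9 - n := by
  simp [inter, Ksurf]

lemma negdef (n : ℕ) (hn : n ≤ 8) (v : ℤ × (Fin n → ℤ))
    (hv : inter n v (Ksurf n) = 0) :
    inter n v v ≤ 0 ∧ (inter n v v = 0 → v = 0) := by
  have hsum : ∑ i, v.2 i = -3 * v.1 := by
    simp [inter, Ksurf] at hv; linarith
  have hCS : (∑ i, v.2 i) ^ 2 ≤ (n : ℤ) * ∑ i, (v.2 i) ^ 2 := by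
    simpa using sq_sum_le_card_mul_sum_sq (s := Finset.univ) (f := v.2)
  have hsqnn : (0 : ℤ) ≤ ∑ i, (v.2 i) ^ 2 := Finset.sum_nonneg fun i _ => sq_nonneg _
  have hn' : ((n : ℤ)) ≤ 8 := by exact_mod_cast hn
  have key : 8 * (inter n v v) + v.1 ^ 2 ≤ 0 := by
    have h9 : 9 * v.1 ^ 2 ≤ (n : ℤ) * ∑ i, (v.2 i) ^ 2 := by rw [hsum] at hCS; nlinarith [hCS]
    have : inter n v v = v.1 ^ 2 - ∑ i, (v.2 i) ^ 2 := by simp [inter, sq]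
    nlinarith
  refine ⟨by nlinarith [sq_nonneg v.1], fun h0 => ?_⟩
  have h1 : v.1 = 0 := by nlinarith [sq_nonneg v.1]
  have h2 : ∑ i, (v.2 i) ^ 2 = 0 := by
    have : inter n v v = v.1 ^ 2 - ∑ i, (v.2 i) ^ 2 := by simp [inter, sq]
    nlinarith
  have h3 : ∀ i, v.2 i = 0 := by
    intro i
    have := (Finset.sum_eq_zero_iff_of_nonneg (fun i _ => sq_nonneg (v.2 i))).1 h2 i (Finset.mem_univ i)
    exact pow_eq_zero_iff (by norm_num) |>.1 this
  exact Prod.ext h1 (funext h3)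

set_option maxHeartbeats 1000000 in
/-- Let `X` be a rational surface of degree `d = K² = 9 − n ≥ 1`
(the blow-up of `ℙ²` at `n ≤ 8` points), `D` a `(d−2)`-class and `C` a `(−1)`-class.
Then `D·C ≥ −1`, and `D·C = −1` only if `d = 1` and `C = D`; in particular, if
`d ≥ 2` then `D·C ≥ 0`. -/
theorem stmt5 (n : ℕ) (hn : n ≤ 8) (D C : ℤ × (Fin n → ℤ))
    (hD2 : inter n D D = (9 - (n : ℤ)) - 2)
    (hDlo : inter n D D + inter n D (Ksurf n) = -2)
    (hC2 : inter n C C = -1)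
    (hClo : inter n C C + inter n C (Ksurf n) = -2) :
    (-1 ≤ inter n D C) ∧
    (inter n D C = -1 → (9 - (n : ℤ)) = 1 ∧ C = D) ∧
    ((2 : ℤ) ≤ 9 - (n : ℤ) → 0 ≤ inter n D C) := by
  set d : ℤ := 9 - (n : ℤ) with hd
  set e : ℤ := inter n D C with he
  have hn' : ((n : ℤ)) ≤ 8 := by exact_mod_cast hn
  have hd1 : 1 ≤ d := by omega
  have hKK : inter n (Ksurf n) (Ksurf n) = d := by rw [inter_KK]
  have hDK : inter n D (Ksurf n) = -d := by linarith
  have hCK : inter n C (Ksurf n) = -1 := by linarith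
  set w1 : ℤ × (Fin n → ℤ) := D + Ksurf n with hw1
  set w2 : ℤ × (Fin n → ℤ) := d • C + Ksurf n with hw2
  have hw1K : inter n w1 (Ksurf n) = 0 := by
    rw [hw1, inter_add_left, hDK, hKK]; ring
  have hw2K : inter n w2 (Ksurf n) = 0 := by
    rw [hw2, inter_add_left, inter_smul_left, hCK, hKK]; ring
  have hw11 : inter n w1 w1 = -2 := by
    simp only [hw1, inter_add_left, inter_add_right]
    rw [inter_comm n (Ksurf n) D, hDK, hKK, hD2]; ring
  have hw12 : inter n w1 w2 = d * (e - 1) := by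
    simp only [hw1, hw2, inter_add_left, inter_add_right, inter_smul_left, inter_smul_right]
    rw [inter_comm n (Ksurf n) C, ← he, hDK, hCK, hKK]; ring
  have hw22 : inter n w2 w2 = -d^2 - d := by
    simp only [hw2, inter_add_left, inter_add_right, inter_smul_left, inter_smul_right]
    rw [inter_comm n (Ksurf n) C, hC2, hCK, hKK]; ring
  set v : ℤ × (Fin n → ℤ) := (-2 : ℤ) • w2 + (-(d * (e - 1))) • w1 with hv
  have hvK : inter n v (Ksurf n) = 0 := by
    rw [hv, inter_add_left, inter_smul_left, inter_smul_left, hw1K, hw2K]; ring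
  have hvv : inter n v v = 4 * (-d^2 - d) + 2 * (d * (e - 1))^2 := by
    simp only [hv, inter_add_left, inter_add_right, inter_smul_left, inter_smul_right]
    rw [inter_comm n w2 w1, hw11, hw22, hw12]; ring
  obtain ⟨hle, heq⟩ := negdef n hn v hvK
  clear_value v
  clear_value w1 w2
  clear_value e
  clear_value d
  have key : d ^ 2 * (e - 1) ^ 2 ≤ 2 * d ^ 2 + 2 * d := by nlinarith [hle, hvv]
  have part1 : -1 ≤ e := by
    by_contra h
    push_neg at h
    have h2 : e ≤ -2 := by omega
    have h9 : 9 ≤ (e - 1) ^ 2 := by nlinarith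
    nlinarith [sq_nonneg d, mul_le_mul_of_nonneg_left h9 (sq_nonneg d)]
  refine ⟨part1, ?_, ?_⟩
  · intro hem1
    have hepos : d = 1 := by
      have h4 : (e - 1) ^ 2 = 4 := by rw [hem1]; ring
      nlinarith [key, hd1]
    refine ⟨hepos, ?_⟩
    have hv0 : inter n v v = 0 := by
      rw [hvv, hepos, hem1]; ring
    have hveq : v = 0 := heq hv0
    have hcoef : -(d * (e - 1)) = 2 := by rw [hepos, hem1]; ring
    have hw : (2 : ℤ) • w1 = (2 : ℤ) • w2 := by
      have h0 : (-2 : ℤ) • w2 + (2 : ℤ) • w1 = 0 := by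
        have h := hveq
        rw [hv, hcoef] at h
        exact h
      have := congrArg (fun x => x + (2 : ℤ) • w2) h0
      simpa [add_assoc, add_comm, add_left_comm, neg_smul, two_smul] using this
    have hw12eq : w1 = w2 := smul_right_injective _ (by norm_num : (2:ℤ) ≠ 0) hw
    have : D + Ksurf n = C + Ksurf n := by
      rw [← hw1, hw12eq, hw2, hepos, one_smul]
    have := add_right_cancel this
    exact this.symm
  · intro hd2
    by_contra h
    push_neg at h
    have h2 : e ≤ -1 := by omega
    have h4 : 4 ≤ (e - 1) ^ 2 := by nlinarith
    nlinarith [key, mul_le_mul_of_nonneg_left h4 (sq_nonneg d)]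
end

section
/- Let (A₁,…,A_n) be a toric system on a smooth projective surface X and let A_{k…l} = A_k + A_{k+1} + … + A_l for a cyclic segment [k,…,l]. Then A_{k…l} is numerically left-orthogonal and A_{k…l}² + 2 = Σ_{i=k}^{l} (A_i² + 2). -/
/-- The numerical data of a smooth projective rational surface `X`
(over an algebraically closed field of characteristic zero):
its Picard group with the intersection form, the canonical class `K`,
the dimensions `hⁱ(D)` of cohomology of line bundles, Serre duality,
the Riemann–Roch formula `χ(D) = 1 + D·(D−K)/2` (which encodes `χ(O_X)=1`),
the effectivity predicate and the classes of irreducible reduced curves. -/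
structure Surface where
  Pic : Type
  [grp : AddCommGroup Pic]
  inter : Pic → Pic → ℤ
  inter_symm : ∀ D E, inter D E = inter E D
  inter_add_left : ∀ D E F, inter (D + E) F = inter D F + inter E F
  inter_zsmul_left : ∀ (m : ℤ) (D E : Pic), inter (m • D) E = m * inter D E
  K : Pic
  h0 : Pic → ℕ
  h1 : Pic → ℕ
  h2 : Pic → ℕ
  serre : ∀ D, h2 D = h0 (K - D)
  riemannRoch : ∀ D,
    2 * ((h0 D : ℤ) - (h1 D : ℤ) + (h2 D : ℤ)) = 2 + inter D (D - K)
  IrredCurve : Pic → Prop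
  Effective : Pic → Prop
  effective_iff_h0 : ∀ D, Effective D ↔ 0 < h0 D
  effective_decomp : ∀ D, Effective D ↔
    ∃ c : Pic →₀ ℕ, (∀ C ∈ c.support, IrredCurve C) ∧ D = c.sum fun C k => k • C
  inter_irred_nonneg : ∀ C C', IrredCurve C → IrredCurve C' → C ≠ C' → 0 ≤ inter C C'

attribute [instance] Surface.grp

namespace Surface

variable (S : Surface)

/-- The Euler characteristic `χ(D) = h⁰(D) − h¹(D) + h²(D)`. -/
def chi (D : S.Pic) : ℤ := (S.h0 D : ℤ) - (S.h1 D : ℤ) + (S.h2 D : ℤ)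

/-- `D` is numerically left-orthogonal: `χ(−D) = 0`. -/
def NumLeftOrth (D : S.Pic) : Prop := S.chi (-D) = 0

/-- `D` is an `r`-class: numerically left-orthogonal with `D² = r`. -/
def IsClass (r : ℤ) (D : S.Pic) : Prop := S.NumLeftOrth D ∧ S.inter D D = r

/-- `D` is nef: nonnegative intersection with every irreducible curve. -/
def Nef (D : S.Pic) : Prop := ∀ C, S.IrredCurve C → 0 ≤ S.inter D C

/-- `X` is a weak del Pezzo surface: `K² > 0` and `−K` is nef. -/
def WeakDelPezzo : Prop := 0 < S.inter S.K S.K ∧ S.Nef (-S.K)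

end Surface

/-- A toric system `(A₁, …, A_n)`: cyclically consecutive classes meet in `1`,
all other pairs are orthogonal, and the total sum is `−K`. -/
def IsToricSystem (S : Surface) {n : ℕ} [NeZero n] (A : Fin n → S.Pic) : Prop :=
  (∀ i : Fin n, S.inter (A i) (A (i + 1)) = 1) ∧
  (∀ i j : Fin n, j ≠ i → j ≠ i + 1 → i ≠ j + 1 → S.inter (A i) (A j) = 0) ∧
  (∑ i, A i = -S.K)


/-!
Write `D = A_k + ⋯ + A_l`. Inside a proper cyclic segment only the `m - 1` consecutive pairs
meet, so `D² = Σ A_i² + 2(m - 1)`; on the other hand each `A_i` meets `−K = Σ A_j` in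
`A_i² + 2` (itself and its two neighbours), so `D·(−K) = Σ A_i² + 2m`. Hence `D² + D·K = −2`,
which by Riemann–Roch says exactly `χ(−D) = 0`. Two neighbours are distinct because `n = 2` is
impossible: then `χ(−A₁) = (2 − A₁·A₂)/2 = 1/2`.
-/

open Fin.NatCast

namespace Surface

variable (S : Surface)

def interLeft (E : S.Pic) : S.Pic →+ ℤ :=
  AddMonoidHom.mk' (S.inter · E) fun D D' => S.inter_add_left D D' E

lemma inter_neg_left (D E : S.Pic) : S.inter (-D) E = -S.inter D E :=
  map_neg (S.interLeft E) D

lemma inter_neg_right (D E : S.Pic) : S.inter D (-E) = -S.inter D E := by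
  rw [S.inter_symm, inter_neg_left, S.inter_symm]

lemma inter_add_right (D E F : S.Pic) : S.inter D (E + F) = S.inter D E + S.inter D F := by
  rw [S.inter_symm, S.inter_add_left, S.inter_symm E, S.inter_symm F]

lemma inter_sum_left {ι : Type*} (s : Finset ι) (B : ι → S.Pic) (E : S.Pic) :
    S.inter (∑ i ∈ s, B i) E = ∑ i ∈ s, S.inter (B i) E :=
  map_sum (S.interLeft E) B s

lemma inter_sum_right {ι : Type*} (s : Finset ι) (B : ι → S.Pic) (E : S.Pic) :
    S.inter E (∑ i ∈ s, B i) = ∑ i ∈ s, S.inter E (B i) := by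
  simp only [S.inter_symm E, inter_sum_left]

lemma inter_add_add_self (D E : S.Pic) :
    S.inter (D + E) (D + E) = S.inter D D + 2 * S.inter D E + S.inter E E := by
  rw [S.inter_add_left, inter_add_right, inter_add_right, S.inter_symm E D]
  ring

lemma numLeftOrth_iff (D : S.Pic) : S.NumLeftOrth D ↔ S.inter D D + S.inter D S.K = -2 := by
  have hRR := S.riemannRoch (-D)
  rw [show -D - S.K = -(D + S.K) by abel, inter_neg_left, inter_neg_right, inter_add_right]
    at hRR
  unfold NumLeftOrth chi
  omega

lemma inter_self_sum_of_chain (B : ℕ → S.Pic) (m : ℕ)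
    (hadj : ∀ i < m, S.inter (B i) (B (i + 1)) = 1)
    (hfar : ∀ i j, i + 1 < j → j ≤ m → S.inter (B i) (B j) = 0) :
    S.inter (∑ i ∈ Finset.range (m + 1), B i) (∑ i ∈ Finset.range (m + 1), B i) =
      ∑ i ∈ Finset.range (m + 1), S.inter (B i) (B i) + 2 * m := by
  induction m with
  | zero => simp
  | succ m ih =>
    have hlast : S.inter (∑ i ∈ Finset.range (m + 1), B i) (B (m + 1)) = 1 := by
      rw [inter_sum_left, Finset.sum_range_succ, hadj m (by omega),
        Finset.sum_eq_zero fun i hi => hfar i (m + 1) (by have := Finset.mem_range.mp hi; omega) le_rfl]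
      simp
    rw [Finset.sum_range_succ, inter_add_add_self, Finset.sum_range_succ _ (m + 1), hlast,
      ih (fun i hi => hadj i (by omega)) (fun i j hij hj => hfar i j hij (by omega))]
    push_cast
    ring

end Surface

lemma Fin.natCast_eq_natCast_of_lt {n : ℕ} [NeZero n] {a b : ℕ} (ha : a < n) (hb : b < n)
    (h : (a : Fin n) = b) : a = b := by
  simpa [Fin.ext_iff, Fin.val_cast_of_lt ha, Fin.val_cast_of_lt hb] using h

namespace IsToricSystem

variable {S : Surface} {n : ℕ} [NeZero n] {A : Fin n → S.Pic}

lemma inter_pred (hA : IsToricSystem S A) (p : Fin n) : S.inter (A p) (A (p - 1)) = 1 := by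
  simpa [S.inter_symm] using hA.1 (p - 1)

lemma ne_two (hA : IsToricSystem S A) : n ≠ 2 := by
  rintro rfl
  have hK : -A 0 - S.K = A 1 := by
    rw [sub_eq_add_neg, ← hA.2.2, Fin.sum_univ_two]
    abel
  have hRR := S.riemannRoch (-A 0)
  have h01 : S.inter (A 0) (A 1) = 1 := hA.1 0
  rw [hK, S.inter_neg_left, h01] at hRR
  omega

lemma inter_neg_K (hA : IsToricSystem S A) (hn : 3 ≤ n) (p : Fin n) :
    S.inter (A p) (-S.K) = S.inter (A p) (A p) + 2 := by
  have one_ne : (1 : Fin n) ≠ 0 := by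
    simp [Fin.ext_iff, Nat.mod_eq_of_lt (show 1 < n by omega)]
  have two_ne : (2 : Fin n) ≠ 0 := by
    simp [Fin.ext_iff, Nat.mod_eq_of_lt (show 2 < n by omega)]
  have hpred : p - 1 ∉ ({p, p + 1} : Finset (Fin n)) := by
    simp only [Finset.mem_insert, Finset.mem_singleton, not_or]
    constructor <;> intro h
    · exact one_ne <| calc (1 : Fin n) = p - (p - 1) := by abel
        _ = 0 := sub_eq_zero.mpr h.symm
    · exact two_ne <| calc (2 : Fin n) = (p + 1) - (p - 1) := by rw [← one_add_one_eq_two]; abel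
        _ = 0 := sub_eq_zero.mpr h.symm
  have hself : p ∉ ({p + 1} : Finset (Fin n)) := by
    simpa [eq_comm] using one_ne
  have hfar : ∀ i ∉ ({p - 1, p, p + 1} : Finset (Fin n)), S.inter (A p) (A i) = 0 := by
    intro i hi
    simp only [Finset.mem_insert, Finset.mem_singleton, not_or] at hi
    exact hA.2.1 p i hi.2.1 hi.2.2 fun h => hi.1 (by simp [h])
  rw [← hA.2.2, S.inter_sum_right,
    ← Finset.sum_subset (Finset.subset_univ _) fun i _ hi => hfar i hi,
    Finset.sum_insert hpred, Finset.sum_insert hself, Finset.sum_singleton, hA.inter_pred, hA.1]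
  ring

lemma inter_self_segment (hA : IsToricSystem S A) (k : Fin n) (m : ℕ) (hm : m + 2 ≤ n) :
    S.inter (∑ j ∈ Finset.range (m + 1), A (k + (j : Fin n)))
        (∑ j ∈ Finset.range (m + 1), A (k + (j : Fin n))) =
      ∑ j ∈ Finset.range (m + 1), S.inter (A (k + (j : Fin n))) (A (k + (j : Fin n))) + 2 * m := by
  have hne : ∀ a b : ℕ, a < n → b < n → a ≠ b → k + (a : Fin n) ≠ k + b := fun a b ha hb hab h =>
    hab (Fin.natCast_eq_natCast_of_lt ha hb (add_left_cancel h))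
  refine S.inter_self_sum_of_chain (fun j => A (k + j)) m
    (fun i _ => by simpa only [Nat.cast_succ, add_assoc] using hA.1 (k + i))
    (fun i j hij hj => hA.2.1 _ _ ?_ ?_ ?_)
  · exact hne j i (by omega) (by omega) (by omega)
  · simpa only [Nat.cast_succ, add_assoc] using hne j (i + 1) (by omega) (by omega) (by omega)
  · simpa only [Nat.cast_succ, add_assoc] using hne i (j + 1) (by omega) (by omega) (by omega)

end IsToricSystem

theorem stmt15_general (S : Surface) (n : ℕ) [NeZero n] (A : Fin n → S.Pic)
    (hA : IsToricSystem S A)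
    (k : Fin n) (m : ℕ) (hm1 : 1 ≤ m) (hm2 : m ≤ n - 1) :
    S.NumLeftOrth (∑ j ∈ Finset.range m, A (k + (j : Fin n))) ∧
    S.inter (∑ j ∈ Finset.range m, A (k + (j : Fin n)))
        (∑ j ∈ Finset.range m, A (k + (j : Fin n))) + 2 =
      ∑ j ∈ Finset.range m,
        (S.inter (A (k + (j : Fin n))) (A (k + (j : Fin n))) + 2) := by
  obtain ⟨m, rfl⟩ : ∃ m', m = m' + 1 := ⟨m - 1, by omega⟩
  have hn : 3 ≤ n := by
    have := hA.ne_two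
    omega
  have hDD := hA.inter_self_segment k m (by omega)
  have hDK : S.inter (∑ j ∈ Finset.range (m + 1), A (k + (j : Fin n))) (-S.K) =
      ∑ j ∈ Finset.range (m + 1), (S.inter (A (k + (j : Fin n))) (A (k + (j : Fin n))) + 2) := by
    rw [S.inter_sum_left]
    exact Finset.sum_congr rfl fun j _ => hA.inter_neg_K hn _
  rw [S.numLeftOrth_iff, hDD]
  simp only [S.inter_neg_right, Finset.sum_add_distrib, Finset.sum_const, Finset.card_range,
    nsmul_eq_mul] at hDK ⊢
  push_cast at hDK ⊢
  constructor <;> linarith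

/-- For a toric system `(A₁,…,A_n)` of maximal length
(`n = rank K₀(X) = 12 − K²`) on a smooth projective surface with `χ(O_X) = 1`, the sum
`A_{k…l} = A_k + ⋯ + A_l` over a (proper, nonempty) cyclic segment, here the segment of
length `m` starting at `k`, is numerically left-orthogonal and satisfies
`A_{k…l}² + 2 = Σ_{i=k}^{l} (A_i² + 2)`. -/
theorem stmt15 (S : Surface) (n : ℕ) [NeZero n] (A : Fin n → S.Pic)
    (hA : IsToricSystem S A) (hn : (n : ℤ) = 12 - S.inter S.K S.K)
    (k : Fin n) (m : ℕ) (hm1 : 1 ≤ m) (hm2 : m ≤ n - 1) :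
    S.NumLeftOrth (∑ j ∈ Finset.range m, A (k + (j : Fin n))) ∧
    S.inter (∑ j ∈ Finset.range m, A (k + (j : Fin n)))
        (∑ j ∈ Finset.range m, A (k + (j : Fin n))) + 2 =
      ∑ j ∈ Finset.range m,
        (S.inter (A (k + (j : Fin n))) (A (k + (j : Fin n))) + 2) :=
  stmt15_general S n A hA k m hm1 hm2
end
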